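/- arXiv:math/0606318 — 3 statements merged into one kernel-verified Lean document; each statement's English description precedes it below -/
import Mathlib

section
/- Let C be an additive category and let φ : b₁ → b₂ be an isomorphism in C. Given objects C₀, D, E, F of C and morphisms α : C₀ → b₁, β : C₀ → D, δ : D → b₂, γ : b₁ → E, ε : D → E, μ : b₂ → F, ν : E → F such that the composites form a complex (i.e., φ∘α + δ∘β = 0 (as the b₂-component), γ∘α + ε∘β = 0, μ∘φ + ν∘γ = 0, μ∘δ + ν∘ε = 0), then the four-term complex segment C₀ → b₁⊕D → b₂⊕E → F with differentials (α,β), [[φ,δ],[γ,ε]], (μ,ν) is isomorphic as a complex segment to the complex C₀ → b₁⊕D → b₂⊕E → F with differentials (0,β), [[φ,0],[0, ε − γ∘φ⁻¹∘δ]], (0,ν). -/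
/-!
Conjugating the middle differential by the unipotent matrices that clear the row and column of
the invertible entry `φ` diagonalises it, leaving the Schur complement `ε - δ φ⁻¹ γ` in the other
corner. The same changes of basis kill the `b₁`-component of the first differential and the
`b₂`-component of the last one, since `d ≫ d = 0` expresses those components through `φ`.
-/

open CategoryTheory Limits

namespace CategoryTheory.Biprod

variable {C : Type*} [Category C] [Preadditive C] [HasBinaryBiproducts C]

theorem desc_lift_eq_ofComponents {X₁ X₂ Y₁ Y₂ : C} (f₁₁ : X₁ ⟶ Y₁) (f₁₂ : X₁ ⟶ Y₂)
    (f₂₁ : X₂ ⟶ Y₁) (f₂₂ : X₂ ⟶ Y₂) :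
    biprod.desc (biprod.lift f₁₁ f₁₂) (biprod.lift f₂₁ f₂₂) = ofComponents f₁₁ f₁₂ f₂₁ f₂₂ := by
  ext <;> simp

theorem lift_comp_unipotentLower_hom {W X₁ X₂ : C} (f : W ⟶ X₁) (g : W ⟶ X₂) (r : X₂ ⟶ X₁) :
    biprod.lift f g ≫ (unipotentLower r).hom = biprod.lift (f + g ≫ r) g := by
  ext <;> simp

theorem unipotentUpper_hom_comp_desc {X₁ X₂ Z : C} (r : X₁ ⟶ X₂) (f : X₁ ⟶ Z) (g : X₂ ⟶ Z) :
    (unipotentUpper r).hom ≫ biprod.desc f g = biprod.desc (f + r ≫ g) g := by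
  ext <;> simp [ofComponents]

theorem unipotentLower_hom_comp_ofComponents_schur {X₁ X₂ Y₁ Y₂ : C} (φ : X₁ ≅ Y₁)
    (f₁₂ : X₁ ⟶ Y₂) (f₂₁ : X₂ ⟶ Y₁) (f₂₂ : X₂ ⟶ Y₂) :
    (unipotentLower (f₂₁ ≫ φ.inv)).hom ≫ ofComponents φ.hom 0 0 (f₂₂ - f₂₁ ≫ φ.inv ≫ f₁₂) =
      ofComponents φ.hom f₁₂ f₂₁ f₂₂ ≫ (unipotentUpper (-(φ.inv ≫ f₁₂))).hom := by
  simp only [unipotentLower_hom, unipotentUpper_hom, ofComponents_comp]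
  congr 1 <;> simp [sub_eq_neg_add]

end CategoryTheory.Biprod

theorem gaussian_elimination_change_of_basis_general
    {C : Type*} [Category C] [Preadditive C] [HasBinaryBiproducts C]
    (C₀ b₁ b₂ D E F : C) (φ : b₁ ≅ b₂)
    (α : C₀ ⟶ b₁) (β : C₀ ⟶ D) (δ : D ⟶ b₂) (γ : b₁ ⟶ E) (ε : D ⟶ E)
    (μ : b₂ ⟶ F) (ν : E ⟶ F)
    (h₁ : α ≫ φ.hom + β ≫ δ = 0)
    (h₃ : φ.hom ≫ μ + γ ≫ ν = 0) :
    ∃ (i₁ : b₁ ⊞ D ≅ b₁ ⊞ D) (i₂ : b₂ ⊞ E ≅ b₂ ⊞ E),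
      biprod.lift α β ≫ i₁.hom = biprod.lift 0 β ∧
      i₁.hom ≫ biprod.desc (biprod.lift φ.hom 0) (biprod.lift 0 (ε - δ ≫ φ.inv ≫ γ)) =
        biprod.desc (biprod.lift φ.hom γ) (biprod.lift δ ε) ≫ i₂.hom ∧
      i₂.hom ≫ biprod.desc 0 ν = biprod.desc μ ν := by
  have hα : α + β ≫ δ ≫ φ.inv = 0 := by
    simpa [Preadditive.add_comp] using h₁ =≫ φ.inv
  have hμ : (-(φ.inv ≫ γ)) ≫ ν = μ := by
    rw [Preadditive.neg_comp, neg_eq_iff_add_eq_zero, Category.assoc, ← φ.inv_hom_id_assoc μ,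
      ← Preadditive.comp_add, add_comm (γ ≫ ν), h₃, comp_zero]
  refine ⟨Biprod.unipotentLower (δ ≫ φ.inv), Biprod.unipotentUpper (-(φ.inv ≫ γ)), ?_, ?_, ?_⟩
  · rw [Biprod.lift_comp_unipotentLower_hom, hα]
  · simp only [Biprod.desc_lift_eq_ofComponents]
    exact Biprod.unipotentLower_hom_comp_ofComponents_schur φ γ δ ε
  · rw [Biprod.unipotentUpper_hom_comp_desc, zero_add, hμ]

/-- Gaussian elimination (Bar-Natan), first part: the four-term complex segment
`C₀ → b₁⊞D → b₂⊞E → F` with differentials `(α,β)`, `[[φ,δ],[γ,ε]]`, `(μ,ν)` is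
isomorphic (via isomorphisms of the middle terms, identity on the ends) to the
segment with differentials `(0,β)`, `[[φ,0],[0,ε−γφ⁻¹δ]]`, `(0,ν)`. -/
theorem gaussian_elimination_change_of_basis
    {C : Type*} [Category C] [Preadditive C] [HasBinaryBiproducts C]
    (C₀ b₁ b₂ D E F : C) (φ : b₁ ≅ b₂)
    (α : C₀ ⟶ b₁) (β : C₀ ⟶ D) (δ : D ⟶ b₂) (γ : b₁ ⟶ E) (ε : D ⟶ E)
    (μ : b₂ ⟶ F) (ν : E ⟶ F)
    (h₁ : α ≫ φ.hom + β ≫ δ = 0)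
    (h₂ : α ≫ γ + β ≫ ε = 0)
    (h₃ : φ.hom ≫ μ + γ ≫ ν = 0)
    (h₄ : δ ≫ μ + ε ≫ ν = 0) :
    ∃ (i₁ : b₁ ⊞ D ≅ b₁ ⊞ D) (i₂ : b₂ ⊞ E ≅ b₂ ⊞ E),
      biprod.lift α β ≫ i₁.hom = biprod.lift 0 β ∧
      i₁.hom ≫ biprod.desc (biprod.lift φ.hom 0) (biprod.lift 0 (ε - δ ≫ φ.inv ≫ γ)) =
        biprod.desc (biprod.lift φ.hom γ) (biprod.lift δ ε) ≫ i₂.hom ∧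
      i₂.hom ≫ biprod.desc 0 ν = biprod.desc μ ν :=
  gaussian_elimination_change_of_basis_general C₀ b₁ b₂ D E F φ α β δ γ ε μ ν h₁ h₃
end

section
/- Let C be an additive category, and suppose a chain complex X in C decomposes as a direct sum X ≅ Y ⊕ Z of complexes, where Z is the two-term complex 0 → b₁ →^φ b₂ → 0 with φ an isomorphism. Then X is homotopy equivalent to Y. -/
open CategoryTheory Limits

namespace ChainComplex

variable {V : Type*} [Category V] [Preadditive V]

/-- The inverse of the differential is a contracting homotopy. -/
noncomputable def homotopyIdZeroOfTwoTerm (Z : ChainComplex V ℤ) (n : ℤ)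
    (hZ : ∀ k, k ≠ n → k ≠ n + 1 → IsZero (Z.X k)) (hd : IsIso (Z.d (n + 1) n)) :
    Homotopy (𝟙 Z) 0 :=
  let h : ∀ k l, (ComplexShape.down ℤ).Rel l k → (Z.X k ⟶ Z.X l) := fun k l r =>
    if hk : k = n then
      haveI : IsIso (Z.d l k) := by
        obtain rfl := hk
        obtain rfl : l = k + 1 := r.symm
        exact hd
      inv (Z.d l k)
    else 0
  have h_of_ne (k l : ℤ) (r) (hk : k ≠ n) : h k l r = 0 := dif_neg hk
  have h_eq : 𝟙 Z = Homotopy.nullHomotopicMap' h := by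
    ext k
    by_cases hkn : k = n
    · subst hkn
      rw [Homotopy.nullHomotopicMap'_f (k₂ := k + 1) (k₀ := k - 1) rfl (sub_add_cancel k 1),
        h_of_ne (k - 1) k (sub_add_cancel k 1) (by omega)]
      simp [h]
    by_cases hkn' : k = n + 1
    · subst hkn'
      rw [Homotopy.nullHomotopicMap'_f (k₂ := n + 1 + 1) rfl rfl,
        h_of_ne (n + 1) (n + 1 + 1) rfl (by omega)]
      simp [h]
    · exact (hZ k hkn hkn').eq_of_src _ _
  (Homotopy.ofEq h_eq).trans (Homotopy.nullHomotopy' h)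

end ChainComplex

namespace HomotopyEquiv

variable {ι V : Type*} [Category V] [Preadditive V] {c : ComplexShape ι}

/-- `fst ≫ inl = 𝟙 - snd ≫ inr`, and `snd ≫ inr` factors through `𝟙 Z ∼ 0`. -/
noncomputable def biprodOfContractible {Y Z : HomologicalComplex V c} [HasBinaryBiproduct Y Z]
    (hZ : Homotopy (𝟙 Z) 0) : HomotopyEquiv (Y ⊞ Z) Y where
  hom := biprod.fst
  inv := biprod.inl
  homotopyHomInvId :=
    have h_snd_inr : Homotopy (biprod.snd ≫ biprod.inr : Y ⊞ Z ⟶ Y ⊞ Z) 0 :=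
      (Homotopy.ofEq (by simp)).trans (((hZ.compLeft biprod.snd).compRight biprod.inr).trans
        (Homotopy.ofEq (by simp)))
    ((Homotopy.ofEq biprod.total.symm).trans (((Homotopy.refl _).add h_snd_inr).trans
      (Homotopy.ofEq (add_zero _)))).symm
  homotopyInvHomId := Homotopy.ofEq (by simp)

end HomotopyEquiv

theorem drop_contractible_summand_general
    {C : Type*} [Category C] [Preadditive C] [HasBinaryBiproducts C]
    (X Y Z : ChainComplex C ℤ) (n₀ : ℤ)
    (hZ : ∀ n, n ≠ n₀ → n ≠ n₀ + 1 → IsZero (Z.X n))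
    (hφ : IsIso (Z.d (n₀ + 1) n₀))
    (e : X ≅ Y ⊞ Z) :
    Nonempty (HomotopyEquiv X Y) :=
  ⟨(HomotopyEquiv.ofIso e).trans
    (HomotopyEquiv.biprodOfContractible (ChainComplex.homotopyIdZeroOfTwoTerm Z n₀ hZ hφ))⟩

/-- If a chain complex `X` decomposes as a direct sum `X ≅ Y ⊞ Z` where `Z` is the
two-term complex `0 → b₁ →φ b₂ → 0` with `φ` an isomorphism, then `X` is homotopy
equivalent to `Y`. -/
theorem drop_contractible_summand
    {C : Type*} [Category C] [Preadditive C] [HasBinaryBiproducts C] [HasZeroObject C]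
    (X Y Z : ChainComplex C ℤ) (n₀ : ℤ)
    (hZ : ∀ n, n ≠ n₀ → n ≠ n₀ + 1 → IsZero (Z.X n))
    (hφ : IsIso (Z.d (n₀ + 1) n₀))
    (e : X ≅ Y ⊞ Z) :
    Nonempty (HomotopyEquiv X Y) :=
  drop_contractible_summand_general X Y Z n₀ hZ hφ e
end

section
/- Let C₀ → b₁⊕D → b₂⊕E → F be a complex segment in an additive category with differentials (α,β), [[φ,δ],[γ,ε]], (μ,ν), where φ : b₁ → b₂ is an isomorphism. Then this complex segment is homotopy equivalent to the complex segment C₀ → D → E → F with differentials β, ε − γ∘φ⁻¹∘δ, ν. In particular the two segments have isomorphic homology at each of the four positions (when C is abelian). -/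
/-!
The projections `b₁ ⊞ D ⟶ D` and `b₂ ⊞ E ⟶ E`, the latter corrected by `-φ⁻¹ ≫ γ`, form a chain
map whose inverse is given by the inclusions `D ⟶ b₁ ⊞ D`, corrected by `-δ ≫ φ⁻¹`, and
`E ⟶ b₂ ⊞ E`. One composite is the identity on the nose; the other is homotopic to the identity
through `b₂ ⊞ E ⟶ b₂ ⟶ b₁ ⟶ b₁ ⊞ D` (via `φ⁻¹`), which contracts the summand `b₁ ⟶ b₂`.
Homotopy equivalent complexes have isomorphic homology.
-/

open CategoryTheory Limits

universe v

namespace CochainComplex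

section HasZeroMorphisms

variable {C : Type*} [Category.{v} C] [HasZeroMorphisms C]

structure FourTermPresentation (X : CochainComplex C ℕ) {Y₀ Y₁ Y₂ Y₃ : C}
    (d₀ : Y₀ ⟶ Y₁) (d₁ : Y₁ ⟶ Y₂) (d₂ : Y₂ ⟶ Y₃) where
  iso₀ : X.X 0 ≅ Y₀
  iso₁ : X.X 1 ≅ Y₁
  iso₂ : X.X 2 ≅ Y₂
  iso₃ : X.X 3 ≅ Y₃
  isZero : ∀ n, 3 < n → IsZero (X.X n)
  d₀_eq : X.d 0 1 = iso₀.hom ≫ d₀ ≫ iso₁.inv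
  d₁_eq : X.d 1 2 = iso₁.hom ≫ d₁ ≫ iso₂.inv
  d₂_eq : X.d 2 3 = iso₂.hom ≫ d₂ ≫ iso₃.inv

namespace FourTermPresentation

variable {X X' X'' : CochainComplex C ℕ}
  {Y₀ Y₁ Y₂ Y₃ Y'₀ Y'₁ Y'₂ Y'₃ Y''₀ Y''₁ Y''₂ Y''₃ : C}
  {d₀ : Y₀ ⟶ Y₁} {d₁ : Y₁ ⟶ Y₂} {d₂ : Y₂ ⟶ Y₃}
  {d'₀ : Y'₀ ⟶ Y'₁} {d'₁ : Y'₁ ⟶ Y'₂} {d'₂ : Y'₂ ⟶ Y'₃}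
  {d''₀ : Y''₀ ⟶ Y''₁} {d''₁ : Y''₁ ⟶ Y''₂} {d''₂ : Y''₂ ⟶ Y''₃}
  (P : FourTermPresentation X d₀ d₁ d₂) (P' : FourTermPresentation X' d'₀ d'₁ d'₂)
  (P'' : FourTermPresentation X'' d''₀ d''₁ d''₂)

theorem d₀_comp_d₁ (P : FourTermPresentation X d₀ d₁ d₂) : d₀ ≫ d₁ = 0 := by
  simpa [P.d₀_eq, P.d₁_eq] using P.iso₀.inv ≫= X.d_comp_d 0 1 2 =≫ P.iso₂.hom

theorem d₁_comp_d₂ (P : FourTermPresentation X d₀ d₁ d₂) : d₁ ≫ d₂ = 0 := by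
  simpa [P.d₁_eq, P.d₂_eq] using P.iso₁.inv ≫= X.d_comp_d 1 2 3 =≫ P.iso₃.hom

def mkHom (f₀ : Y₀ ⟶ Y'₀) (f₁ : Y₁ ⟶ Y'₁) (f₂ : Y₂ ⟶ Y'₂) (f₃ : Y₃ ⟶ Y'₃)
    (w₀ : d₀ ≫ f₁ = f₀ ≫ d'₀) (w₁ : d₁ ≫ f₂ = f₁ ≫ d'₁) (w₂ : d₂ ≫ f₃ = f₂ ≫ d'₂) :
    X ⟶ X' where
  f
    | 0 => P.iso₀.hom ≫ f₀ ≫ P'.iso₀.inv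
    | 1 => P.iso₁.hom ≫ f₁ ≫ P'.iso₁.inv
    | 2 => P.iso₂.hom ≫ f₂ ≫ P'.iso₂.inv
    | 3 => P.iso₃.hom ≫ f₃ ≫ P'.iso₃.inv
    | _ + 4 => 0
  comm' := by
    rintro i j (rfl : i + 1 = j)
    match i with
    | 0 => simp [P.d₀_eq, P'.d₀_eq, reassoc_of% w₀]
    | 1 => simp [P.d₁_eq, P'.d₁_eq, reassoc_of% w₁]
    | 2 => simp [P.d₂_eq, P'.d₂_eq, reassoc_of% w₂]
    | n + 3 => exact (P'.isZero (n + 4) (by omega)).eq_of_tgt _ _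

theorem mkHom_id :
    P.mkHom P (𝟙 Y₀) (𝟙 Y₁) (𝟙 Y₂) (𝟙 Y₃) (by simp) (by simp) (by simp) = 𝟙 X := by
  ext n
  match n with
  | 0 | 1 | 2 | 3 => simp [mkHom]
  | n + 4 => exact (P.isZero (n + 4) (by omega)).eq_of_src _ _

theorem mkHom_comp {f₀ : Y₀ ⟶ Y'₀} {f₁ : Y₁ ⟶ Y'₁} {f₂ : Y₂ ⟶ Y'₂} {f₃ : Y₃ ⟶ Y'₃}
    {w₀ : d₀ ≫ f₁ = f₀ ≫ d'₀} {w₁ : d₁ ≫ f₂ = f₁ ≫ d'₁} {w₂ : d₂ ≫ f₃ = f₂ ≫ d'₂}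
    {g₀ : Y'₀ ⟶ Y''₀} {g₁ : Y'₁ ⟶ Y''₁} {g₂ : Y'₂ ⟶ Y''₂} {g₃ : Y'₃ ⟶ Y''₃}
    {v₀ : d'₀ ≫ g₁ = g₀ ≫ d''₀} {v₁ : d'₁ ≫ g₂ = g₁ ≫ d''₁} {v₂ : d'₂ ≫ g₃ = g₂ ≫ d''₂} :
    P.mkHom P' f₀ f₁ f₂ f₃ w₀ w₁ w₂ ≫ P'.mkHom P'' g₀ g₁ g₂ g₃ v₀ v₁ v₂ =
      P.mkHom P'' (f₀ ≫ g₀) (f₁ ≫ g₁) (f₂ ≫ g₂) (f₃ ≫ g₃)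
        (by simp [reassoc_of% w₀, v₀]) (by simp [reassoc_of% w₁, v₁])
        (by simp [reassoc_of% w₂, v₂]) := by
  ext n
  match n with
  | 0 | 1 | 2 | 3 => simp [mkHom]
  | n + 4 => exact (P.isZero (n + 4) (by omega)).eq_of_src _ _

end FourTermPresentation

end HasZeroMorphisms

section Preadditive

variable {C : Type*} [Category.{v} C] [Preadditive C]

namespace FourTermPresentation

variable {X X' : CochainComplex C ℕ} {Y₀ Y₁ Y₂ Y₃ Y'₀ Y'₁ Y'₂ Y'₃ : C}
  {d₀ : Y₀ ⟶ Y₁} {d₁ : Y₁ ⟶ Y₂} {d₂ : Y₂ ⟶ Y₃}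
  {d'₀ : Y'₀ ⟶ Y'₁} {d'₁ : Y'₁ ⟶ Y'₂} {d'₂ : Y'₂ ⟶ Y'₃}
  (P : FourTermPresentation X d₀ d₁ d₂) (P' : FourTermPresentation X' d'₀ d'₁ d'₂)

def mkHomotopy {f₀ : Y₀ ⟶ Y'₀} {f₁ : Y₁ ⟶ Y'₁} {f₂ : Y₂ ⟶ Y'₂} {f₃ : Y₃ ⟶ Y'₃}
    {w₀ : d₀ ≫ f₁ = f₀ ≫ d'₀} {w₁ : d₁ ≫ f₂ = f₁ ≫ d'₁} {w₂ : d₂ ≫ f₃ = f₂ ≫ d'₂}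
    {g₀ : Y₀ ⟶ Y'₀} {g₁ : Y₁ ⟶ Y'₁} {g₂ : Y₂ ⟶ Y'₂} {g₃ : Y₃ ⟶ Y'₃}
    {v₀ : d₀ ≫ g₁ = g₀ ≫ d'₀} {v₁ : d₁ ≫ g₂ = g₁ ≫ d'₁} {v₂ : d₂ ≫ g₃ = g₂ ≫ d'₂}
    (h₁ : Y₁ ⟶ Y'₀) (h₂ : Y₂ ⟶ Y'₁) (h₃ : Y₃ ⟶ Y'₂)
    (c₀ : f₀ = d₀ ≫ h₁ + g₀) (c₁ : f₁ = d₁ ≫ h₂ + h₁ ≫ d'₀ + g₁)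
    (c₂ : f₂ = d₂ ≫ h₃ + h₂ ≫ d'₁ + g₂) (c₃ : f₃ = h₃ ≫ d'₂ + g₃) :
    Homotopy (P.mkHom P' f₀ f₁ f₂ f₃ w₀ w₁ w₂) (P.mkHom P' g₀ g₁ g₂ g₃ v₀ v₁ v₂) where
  hom
    | 1, 0 => P.iso₁.hom ≫ h₁ ≫ P'.iso₀.inv
    | 2, 1 => P.iso₂.hom ≫ h₂ ≫ P'.iso₁.inv
    | 3, 2 => P.iso₃.hom ≫ h₃ ≫ P'.iso₂.inv
    | _, _ => 0
  zero i j h := by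
    match i, j with
    | 1, 0 | 2, 1 | 3, 2 => exact absurd rfl h
    | 0, _ | 1, _ + 1 | 2, 0 | 2, _ + 2 | 3, 0 | 3, 1 | 3, _ + 3 | _ + 4, _ => rfl
  comm i := by
    match i with
    | 0 =>
      rw [dNext_eq _ (show (ComplexShape.up ℕ).Rel 0 1 from rfl)]
      simp [mkHom, P.d₀_eq, c₀]
    | 1 =>
      rw [dNext_eq _ (show (ComplexShape.up ℕ).Rel 1 2 from rfl),
        prevD_eq _ (show (ComplexShape.up ℕ).Rel 0 1 from rfl)]
      simp [mkHom, P.d₁_eq, P'.d₀_eq, c₁]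
    | 2 =>
      rw [dNext_eq _ (show (ComplexShape.up ℕ).Rel 2 3 from rfl),
        prevD_eq _ (show (ComplexShape.up ℕ).Rel 1 2 from rfl)]
      simp [mkHom, P.d₂_eq, P'.d₁_eq, c₂]
    | 3 =>
      rw [dNext_eq _ (show (ComplexShape.up ℕ).Rel 3 4 from rfl),
        prevD_eq _ (show (ComplexShape.up ℕ).Rel 2 3 from rfl)]
      simp [mkHom, P'.d₂_eq, c₃]
    | n + 4 => exact (P.isZero (n + 4) (by omega)).eq_of_src _ _

end FourTermPresentation

end Preadditive

end CochainComplex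

namespace GaussianElimination

variable {C : Type*} [Category.{v} C] [Preadditive C] {b₁ b₂ D E : C}
  [HasBinaryBiproduct b₁ D] [HasBinaryBiproduct b₂ E]
  (φ : b₁ ≅ b₂) (γ : b₁ ⟶ E) (δ : D ⟶ b₂) (ε : D ⟶ E)

theorem comp_lift_eq_lift_of_comp_eq_zero {C₀ : C} {α : C₀ ⟶ b₁} {β : C₀ ⟶ D}
    (h : biprod.lift α β ≫ biprod.desc (biprod.lift φ.hom γ) (biprod.lift δ ε) = 0) :
    β ≫ biprod.lift (-(δ ≫ φ.inv)) (𝟙 D) = biprod.lift α β := by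
  have hφ : α ≫ φ.hom + β ≫ δ = 0 := by simpa using h =≫ biprod.fst
  ext
  · simp [reassoc_of% (eq_neg_of_add_eq_zero_right hφ)]
  · simp

theorem desc_eq_desc_comp_of_comp_eq_zero {F : C} {μ : b₂ ⟶ F} {ν : E ⟶ F}
    (h : biprod.desc (biprod.lift φ.hom γ) (biprod.lift δ ε) ≫ biprod.desc μ ν = 0) :
    biprod.desc μ ν = biprod.desc (-(φ.inv ≫ γ)) (𝟙 E) ≫ ν := by
  have hφ : φ.hom ≫ μ + γ ≫ ν = 0 := by simpa using biprod.inl ≫= h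
  ext
  · simp [eq_neg_of_add_eq_zero_right hφ]
  · simp

theorem desc_lift_comp_desc :
    biprod.desc (biprod.lift φ.hom γ) (biprod.lift δ ε) ≫ biprod.desc (-(φ.inv ≫ γ)) (𝟙 E) =
      biprod.snd ≫ (ε - δ ≫ φ.inv ≫ γ) := by
  ext
  · simp
  · simp [sub_eq_neg_add]

theorem lift_comp_desc_lift :
    biprod.lift (-(δ ≫ φ.inv)) (𝟙 D) ≫ biprod.desc (biprod.lift φ.hom γ) (biprod.lift δ ε) =
      (ε - δ ≫ φ.inv ≫ γ) ≫ biprod.inr := by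
  ext
  · simp
  · simp [sub_eq_neg_add]

theorem desc_lift_comp_fst_add_snd_comp_lift :
    biprod.desc (biprod.lift φ.hom γ) (biprod.lift δ ε) ≫ biprod.fst ≫ φ.inv ≫ biprod.inl +
      biprod.snd ≫ biprod.lift (-(δ ≫ φ.inv)) (𝟙 D) = 𝟙 (b₁ ⊞ D) := by
  ext <;> simp

theorem fst_comp_desc_lift_add_desc_comp_inr :
    (biprod.fst ≫ φ.inv ≫ biprod.inl) ≫ biprod.desc (biprod.lift φ.hom γ) (biprod.lift δ ε) +
      biprod.desc (-(φ.inv ≫ γ)) (𝟙 E) ≫ biprod.inr = 𝟙 (b₂ ⊞ E) := by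
  ext <;> simp

variable {φ γ δ ε} {X X' : CochainComplex C ℕ} {C₀ F : C}
  {α : C₀ ⟶ b₁} {β : C₀ ⟶ D} {μ : b₂ ⟶ F} {ν : E ⟶ F}

noncomputable def homotopyEquiv
    (P : CochainComplex.FourTermPresentation X (biprod.lift α β)
      (biprod.desc (biprod.lift φ.hom γ) (biprod.lift δ ε)) (biprod.desc μ ν))
    (P' : CochainComplex.FourTermPresentation X' β (ε - δ ≫ φ.inv ≫ γ) ν) :
    HomotopyEquiv X X' where
  hom := P.mkHom P' (𝟙 C₀) biprod.snd (biprod.desc (-(φ.inv ≫ γ)) (𝟙 E)) (𝟙 F) (by simp)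
    (desc_lift_comp_desc φ γ δ ε)
    (by simpa using desc_eq_desc_comp_of_comp_eq_zero φ γ δ ε P.d₁_comp_d₂)
  inv := P'.mkHom P (𝟙 C₀) (biprod.lift (-(δ ≫ φ.inv)) (𝟙 D)) biprod.inr (𝟙 F)
    (by simpa using comp_lift_eq_lift_of_comp_eq_zero φ γ δ ε P.d₀_comp_d₁)
    (lift_comp_desc_lift φ γ δ ε).symm (by simp)
  homotopyHomInvId := Homotopy.symm <| (Homotopy.ofEq P.mkHom_id.symm).trans <|
    (P.mkHomotopy P 0 (biprod.fst ≫ φ.inv ≫ biprod.inl) 0 (by simp)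
      (by rw [zero_comp, add_zero, desc_lift_comp_fst_add_snd_comp_lift])
      (by rw [comp_zero, zero_add, fst_comp_desc_lift_add_desc_comp_inr])
      (by simp)).trans (Homotopy.ofEq (P.mkHom_comp P' P).symm)
  homotopyInvHomId := (Homotopy.ofEq (P'.mkHom_comp P P')).trans <|
    (P'.mkHomotopy P' 0 0 0 (by simp) (by simp) (by simp) (by simp)).trans
      (Homotopy.ofEq P'.mkHom_id)

end GaussianElimination

/-- Bar-Natan's Gaussian elimination: the four-term complex segment
`C₀ → b₁⊞D → b₂⊞E → F` (extended by zero) with differentials `(α,β)`,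
`[[φ,δ],[γ,ε]]`, `(μ,ν)`, where `φ` is an isomorphism, is homotopy equivalent to
the segment `C₀ → D → E → F` with differentials `β`, `ε − γ∘φ⁻¹∘δ`, `ν`;
in particular the two have isomorphic homology at each position. -/
theorem gaussian_elimination_homotopy_equiv
    {C : Type*} [Category C] [Abelian C]
    (C₀ b₁ b₂ D E F : C) (φ : b₁ ≅ b₂)
    (α : C₀ ⟶ b₁) (β : C₀ ⟶ D) (δ : D ⟶ b₂) (γ : b₁ ⟶ E) (ε : D ⟶ E)
    (μ : b₂ ⟶ F) (ν : E ⟶ F)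
    (X X' : CochainComplex C ℕ)
    (e₀ : X.X 0 ≅ C₀) (e₁ : X.X 1 ≅ b₁ ⊞ D) (e₂ : X.X 2 ≅ b₂ ⊞ E) (e₃ : X.X 3 ≅ F)
    (hX : ∀ n, 3 < n → IsZero (X.X n))
    (hd₀ : X.d 0 1 = e₀.hom ≫ biprod.lift α β ≫ e₁.inv)
    (hd₁ : X.d 1 2 =
      e₁.hom ≫ biprod.desc (biprod.lift φ.hom γ) (biprod.lift δ ε) ≫ e₂.inv)
    (hd₂ : X.d 2 3 = e₂.hom ≫ biprod.desc μ ν ≫ e₃.inv)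
    (f₀ : X'.X 0 ≅ C₀) (f₁ : X'.X 1 ≅ D) (f₂ : X'.X 2 ≅ E) (f₃ : X'.X 3 ≅ F)
    (hX' : ∀ n, 3 < n → IsZero (X'.X n))
    (hd'₀ : X'.d 0 1 = f₀.hom ≫ β ≫ f₁.inv)
    (hd'₁ : X'.d 1 2 = f₁.hom ≫ (ε - δ ≫ φ.inv ≫ γ) ≫ f₂.inv)
    (hd'₂ : X'.d 2 3 = f₂.hom ≫ ν ≫ f₃.inv) :
    Nonempty (HomotopyEquiv X X') ∧ ∀ n, Nonempty (X.homology n ≅ X'.homology n) := by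
  let e := GaussianElimination.homotopyEquiv
    (⟨e₀, e₁, e₂, e₃, hX, hd₀, hd₁, hd₂⟩ : CochainComplex.FourTermPresentation X _ _ _)
    (⟨f₀, f₁, f₂, f₃, hX', hd'₀, hd'₁, hd'₂⟩ : CochainComplex.FourTermPresentation X' _ _ _)
  exact ⟨⟨e⟩, fun n => ⟨e.toHomologyIso n⟩⟩
end
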